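/- Let F : P(ℝ^d) → ℝ be convex, of class C^1 and bounded from below, with intrinsic derivative D_mF, let U, g, H, V^σ be as in the context, and let σ > 0. Suppose m̃ ∈ P_2(ℝ^d) has a C^1, everywhere strictly positive density (again denoted m̃) with H(m̃) < ∞, such that D_mF(m̃,x) + (σ²/2)( ∇m̃(x)/m̃(x) + ∇U(x) ) = 0 for all x ∈ ℝ^d. Then m̃ is the unique minimizer of V^σ over P(ℝ^d). -/

import Mathlib

open MeasureTheory Real Filter Topology
open scoped ENNReal NNReal RealInnerProductSpace

noncomputable section

/-- Euclidean space `ℝ^d`. -/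
abbrev Rd (d : ℕ) : Type := EuclideanSpace ℝ (Fin d)

/-- Borel probability measures. -/
abbrev PM (α : Type*) [MeasurableSpace α] := MeasureTheory.ProbabilityMeasure α

/-- Finite second moment, i.e. membership in `P₂`. -/
def P2 {α : Type*} [MeasurableSpace α] [NormedAddCommGroup α] (μ : PM α) : Prop :=
  Integrable (fun x => ‖x‖ ^ 2) (μ : Measure α)

/-- The convex combination `(1-λ)·μ + λ·ν` of probability measures (with `λ` clamped
to `[0,1]`, which is the only range in which it is ever used). -/
def convComb {α : Type*} [MeasurableSpace α] (lam : ℝ) (μ ν : PM α) : PM α :=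
  ⟨(ENNReal.ofReal (1 - max 0 (min lam 1))) • (μ : Measure α)
      + (ENNReal.ofReal (max 0 (min lam 1))) • (ν : Measure α), by
    have ht0 : 0 ≤ max 0 (min lam 1) := le_max_left _ _
    have ht1 : max 0 (min lam 1) ≤ 1 := max_le zero_le_one (min_le_right _ _)
    constructor
    simp only [Measure.coe_add, Measure.coe_smul, Pi.add_apply, Pi.smul_apply,
      measure_univ, smul_eq_mul, mul_one]
    rw [← ENNReal.ofReal_add (by linarith) ht0]
    norm_num⟩

/-- `F` is of class `C¹` on the space of probability measures, with linear functional
derivative `DF`. -/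
structure IsC1 {α : Type*} [MeasurableSpace α] [TopologicalSpace α] [OpensMeasurableSpace α]
    (F : PM α → ℝ) (DF : PM α → α → ℝ) : Prop where
  bounded : ∃ C, ∀ m x, |DF m x| ≤ C
  cont : Continuous fun p : PM α × α => DF p.1 p.2
  deriv_eq : ∀ m m' : PM α,
    F m' - F m = ∫ lam in (0:ℝ)..1,
      (∫ x, DF (convComb lam m m') x ∂(m' : Measure α)
        - ∫ x, DF (convComb lam m m') x ∂(m : Measure α))

/-- Convexity of a function of probability measures. -/
def ConvexPM {α : Type*} [MeasurableSpace α] (F : PM α → ℝ) : Prop :=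
  ∀ (m m' : PM α) (a : ℝ), 0 ≤ a → a ≤ 1 →
    F (convComb a m m') ≤ (1 - a) * F m + a * F m'

/-- Assumptions on the Gibbs potential `U`. -/
structure GibbsPotential {d : ℕ} (U : Rd d → ℝ) : Prop where
  smooth : ContDiff ℝ (⊤ : ℕ∞) U
  lipGrad : ∃ K : ℝ≥0, LipschitzWith K (fun x => gradient U x)
  diss : ∃ cU cU' : ℝ, 0 < cU ∧ ∀ x : Rd d, cU * ‖x‖ ^ 2 + cU' ≤ ⟪gradient U x, x⟫
  isDensity : ∫ x, Real.exp (-U x) = 1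

/-- `ρ` is a density (w.r.t. Lebesgue) of the probability measure `m`, for which the
relative entropy integrand `ρ log ρ + ρ U` (note `log (ρ/e^{-U}) = log ρ + U`) is integrable. -/
def EntPred {d : ℕ} (U : Rd d → ℝ) (m : PM (Rd d)) (ρ : Rd d → ℝ) : Prop :=
  Measurable ρ ∧ (∀ x, 0 ≤ ρ x) ∧
    (m : Measure (Rd d)) = (volume : Measure (Rd d)).withDensity (fun x => ENNReal.ofReal (ρ x)) ∧
    Integrable (fun x => ρ x * Real.log (ρ x) + ρ x * U x)

/-- The relative entropy `H(m) = ∫ m log (m / e^{-U})`, valued in `(-∞, ∞]`;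
it equals `+∞` unless `m` is absolutely continuous with an integrable entropy integrand
(for probability measures the negative part of the integrand is always integrable, so this
agrees with the usual convention). -/
def relEnt {d : ℕ} (U : Rd d → ℝ) (m : PM (Rd d)) : EReal :=
  letI : Decidable (∃ ρ, EntPred U m ρ) := Classical.propDecidable _
  if h : ∃ ρ, EntPred U m ρ then
    ((∫ x, (h.choose x * Real.log (h.choose x) + h.choose x * U x) : ℝ) : EReal)
  else ⊤

/-- The free energy `V^σ(m) = F(m) + (σ²/2) H(m)`, valued in `(-∞, ∞]`. -/
def freeEnergy {d : ℕ} (σ : ℝ) (U : Rd d → ℝ) (F : PM (Rd d) → ℝ) (m : PM (Rd d)) : EReal :=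
  (F m : EReal) + ((σ ^ 2 / 2 : ℝ) : EReal) * relEnt U m

/-- The 2-Wasserstein distance. -/
def W2 {α : Type*} [MeasurableSpace α] [NormedAddCommGroup α] (μ ν : PM α) : ℝ :=
  sInf { r : ℝ | ∃ cpl : Measure (α × α),
    cpl.map Prod.fst = (μ : Measure α) ∧ cpl.map Prod.snd = (ν : Measure α) ∧
    r = ((∫⁻ p, ENNReal.ofReal (‖p.1 - p.2‖ ^ 2) ∂cpl).toReal) ^ (1 / 2 : ℝ) }

/-- Divergence of a vector field on `ℝ^d`. -/
def diverg {d : ℕ} (v : Rd d → Rd d) (x : Rd d) : ℝ :=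
  LinearMap.trace ℝ (Rd d) (fderiv ℝ v x : Rd d →ₗ[ℝ] Rd d)

-- helpers
section helpers

variable {α : Type*} [MeasurableSpace α]

lemma clamp_nonneg (t : ℝ) : 0 ≤ max 0 (min t 1) := le_max_left _ _
lemma clamp_le_one (t : ℝ) : max 0 (min t 1) ≤ 1 := max_le zero_le_one (min_le_right _ _)
lemma clamp_eq {t : ℝ} (h0 : 0 ≤ t) (h1 : t ≤ 1) : max 0 (min t 1) = t := by
  rw [min_eq_left h1, max_eq_right h0]

lemma convComb_coe (t : ℝ) (μ ν : PM α) :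
    (convComb t μ ν : Measure α)
      = (ENNReal.ofReal (1 - max 0 (min t 1))) • (μ : Measure α)
        + (ENNReal.ofReal (max 0 (min t 1))) • (ν : Measure α) := rfl

lemma integral_convComb (t : ℝ) (μ ν : PM α) (f : α → ℝ)
    (hfμ : Integrable f (μ : Measure α)) (hfν : Integrable f (ν : Measure α)) :
    ∫ x, f x ∂(convComb t μ ν : Measure α)
      = (1 - max 0 (min t 1)) * ∫ x, f x ∂(μ : Measure α)
        + max 0 (min t 1) * ∫ x, f x ∂(ν : Measure α) := by
  have hs0 := clamp_nonneg t
  have hs1 := clamp_le_one t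
  rw [convComb_coe,
    integral_add_measure (hfμ.smul_measure ENNReal.ofReal_ne_top)
      (hfν.smul_measure ENNReal.ofReal_ne_top),
    integral_smul_measure, integral_smul_measure,
    ENNReal.toReal_ofReal (by linarith), ENNReal.toReal_ofReal hs0]
  simp [smul_eq_mul]

variable [TopologicalSpace α] [OpensMeasurableSpace α]

lemma continuous_convComb (μ ν : PM α) : Continuous fun t : ℝ => convComb t μ ν := by
  rw [continuous_iff_continuousAt]
  intro t₀
  have hclamp : Continuous fun t : ℝ => max 0 (min t 1) :=
    continuous_const.max (continuous_id.min continuous_const)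
  refine ProbabilityMeasure.tendsto_iff_forall_integral_tendsto.mpr fun f => ?_
  simp_rw [integral_convComb _ _ _ _ (f.integrable _) (f.integrable _)]
  exact (((continuous_const.sub hclamp).mul continuous_const).add
    (hclamp.mul continuous_const)).tendsto t₀

lemma DF_cont {F : PM α → ℝ} {DF : PM α → α → ℝ} (hC1 : IsC1 F DF) (ν : PM α) :
    Continuous (DF ν) := hC1.cont.comp (continuous_const.prodMk continuous_id)

lemma DF_integrable {F : PM α → ℝ} {DF : PM α → α → ℝ} (hC1 : IsC1 F DF)
    {C : ℝ} (hC : ∀ m x, |DF m x| ≤ C) (ν μ' : PM α) :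
    Integrable (DF ν) (μ' : Measure α) := by
  refine Integrable.mono' (integrable_const C) (DF_cont hC1 ν).aestronglyMeasurable
    (ae_of_all _ fun x => ?_)
  simpa [Real.norm_eq_abs] using hC ν x

end helpers

section gradIneq

variable {α : Type*} [MeasurableSpace α] [TopologicalSpace α] [OpensMeasurableSpace α]

/-- The convexity gradient inequality: `∫ DF(m₀) d(m - m₀) ≤ F m - F m₀`. -/
lemma gradient_ineq {F : PM α → ℝ} {DF : PM α → α → ℝ}
    (hC1 : IsC1 F DF) (hConv : ConvexPM F) (m0 m : PM α) :
    (∫ x, DF m0 x ∂(m : Measure α)) - ∫ x, DF m0 x ∂(m0 : Measure α) ≤ F m - F m0 := by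
  obtain ⟨C, hC⟩ := hC1.bounded
  have hint : ∀ ν μ' : PM α, Integrable (DF ν) (μ' : Measure α) := DF_integrable hC1 hC
  set c : ℝ → PM α := fun t => convComb t m0 m with hc
  set ψ : ℝ → ℝ := fun t =>
    (∫ x, DF (c t) x ∂(m : Measure α)) - ∫ x, DF (c t) x ∂(m0 : Measure α) with hψ
  have hcCont : Continuous c := continuous_convComb m0 m
  have hterm : ∀ μ' : PM α, Continuous fun t => ∫ x, DF (c t) x ∂(μ' : Measure α) := by
    intro μ'
    rw [continuous_iff_continuousAt]
    intro t₀
    refine tendsto_integral_filter_of_dominated_convergence (fun _ => C)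
      (Eventually.of_forall fun t => (DF_cont hC1 (c t)).aestronglyMeasurable)
      (Eventually.of_forall fun t => ae_of_all _ fun x => by
        simpa [Real.norm_eq_abs] using hC (c t) x)
      (integrable_const C)
      (ae_of_all _ fun x => ?_)
    exact ((hC1.cont.comp (hcCont.prodMk continuous_const)).tendsto t₀)
  have hψcont : Continuous ψ := (hterm m).sub (hterm m0)
  have hψbound : ∀ t, |ψ t| ≤ C + C := by
    intro t
    have h1 : ∀ μ' : PM α, |∫ x, DF (c t) x ∂(μ' : Measure α)| ≤ C := by
      intro μ'
      have := norm_integral_le_of_norm_le_const (μ := (μ' : Measure α)) (f := DF (c t)) (C := C)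
        (ae_of_all _ fun x => by simpa [Real.norm_eq_abs] using hC (c t) x)
      simpa [Real.norm_eq_abs] using this
    calc |ψ t| ≤ |∫ x, DF (c t) x ∂(m : Measure α)| + |∫ x, DF (c t) x ∂(m0 : Measure α)| :=
          abs_sub _ _
    _ ≤ C + C := add_le_add (h1 m) (h1 m0)
  -- key identity
  have hkey : ∀ lam : ℝ, 0 < lam → lam ≤ 1 →
      F (c lam) - F m0 = ∫ s in (0:ℝ)..1, lam * ψ (s * lam) := by
    intro lam h0 h1
    rw [hC1.deriv_eq m0 (c lam)]
    apply intervalIntegral.integral_congr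
    intro s hs
    rw [Set.uIcc_of_le (by norm_num : (0:ℝ) ≤ 1)] at hs
    have hs0 : 0 ≤ s := hs.1
    have hs1 : s ≤ 1 := hs.2
    have hsl0 : 0 ≤ s * lam := mul_nonneg hs0 h0.le
    have hsl1 : s * lam ≤ 1 := by nlinarith
    have hcc : convComb s m0 (c lam) = c (s * lam) := by
      apply Subtype.ext
      show (ENNReal.ofReal (1 - max 0 (min s 1))) • (m0 : Measure α)
          + (ENNReal.ofReal (max 0 (min s 1))) • ((c lam : Measure α))
        = (ENNReal.ofReal (1 - max 0 (min (s * lam) 1))) • (m0 : Measure α)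
          + (ENNReal.ofReal (max 0 (min (s * lam) 1))) • (m : Measure α)
      rw [clamp_eq hs0 hs1, clamp_eq hsl0 hsl1, convComb_coe, clamp_eq h0.le h1,
        smul_add, smul_smul, smul_smul, ← add_assoc,
        ← ENNReal.ofReal_mul hs0, ← ENNReal.ofReal_mul hs0, ← add_smul,
        ← ENNReal.ofReal_add (by linarith) (by nlinarith)]
      have : 1 - s + s * (1 - lam) = 1 - s * lam := by ring
      rw [this]
    show (∫ x, DF (convComb s m0 (c lam)) x ∂((c lam) : Measure α))
        - ∫ x, DF (convComb s m0 (c lam)) x ∂(m0 : Measure α) = lam * ψ (s * lam)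
    rw [hcc]
    show (∫ x, DF (c (s * lam)) x ∂(convComb lam m0 m : Measure α))
        - ∫ x, DF (c (s * lam)) x ∂(m0 : Measure α) = lam * ψ (s * lam)
    rw [integral_convComb lam m0 m _ (hint _ _) (hint _ _), clamp_eq h0.le h1, hψ]
    ring
  -- bound on averaged slope
  have hQ : ∀ lam : ℝ, 0 < lam → lam ≤ 1 →
      (∫ s in (0:ℝ)..1, ψ (s * lam)) ≤ F m - F m0 := by
    intro lam h0 h1
    have h2 := hConv m0 m lam h0.le h1
    have h3 := hkey lam h0 h1
    rw [intervalIntegral.integral_const_mul] at h3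
    have h4 : lam * (∫ s in (0:ℝ)..1, ψ (s * lam)) ≤ lam * (F m - F m0) := by
      rw [← h3]; show F (c lam) - F m0 ≤ _; unfold c; linarith
    exact le_of_mul_le_mul_left h4 h0
  -- limit as lam → 0⁺
  have hlim : Tendsto (fun lam => ∫ s in (0:ℝ)..1, ψ (s * lam)) (𝓝[>] (0:ℝ)) (𝓝 (ψ 0)) := by
    have heq : ∀ lam : ℝ, (∫ s in (0:ℝ)..1, ψ (s * lam))
        = ∫ s in Set.Ioc (0:ℝ) 1, ψ (s * lam) ∂volume := fun lam =>
      intervalIntegral.integral_of_le zero_le_one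
    simp_rw [heq]
    have hconst : (∫ _s in Set.Ioc (0:ℝ) 1, ψ 0 ∂volume) = ψ 0 := by
      rw [setIntegral_const]
      simp [Real.volume_Ioc]
    rw [← hconst]
    refine tendsto_integral_filter_of_dominated_convergence (fun _ => C + C)
      (Eventually.of_forall fun lam =>
        (hψcont.comp (continuous_id.mul continuous_const)).aestronglyMeasurable)
      (Eventually.of_forall fun lam => ae_of_all _ fun s => by
        simpa [Real.norm_eq_abs] using hψbound (s * lam))
      (integrable_const _)
      (ae_of_all _ fun s => ?_)
    have h5 : Tendsto (fun lam : ℝ => s * lam) (𝓝[>] (0:ℝ)) (𝓝 0) := by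
      have h6 : Tendsto (fun lam : ℝ => s * lam) (𝓝 (0:ℝ)) (𝓝 (s * 0)) :=
        (continuous_mul_left s).tendsto 0
      rw [mul_zero] at h6
      exact h6.mono_left nhdsWithin_le_nhds
    exact (hψcont.tendsto 0).comp h5
  have hev : ∀ᶠ lam in 𝓝[>] (0:ℝ), (∫ s in (0:ℝ)..1, ψ (s * lam)) ≤ F m - F m0 := by
    filter_upwards [Ioc_mem_nhdsGT (zero_lt_one (α := ℝ))] with lam hlam
    exact hQ lam hlam.1 hlam.2
  have hfin : ψ 0 ≤ F m - F m0 := le_of_tendsto hlim hev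
  have hc0 : c 0 = m0 := by
    apply Subtype.ext
    show (ENNReal.ofReal (1 - max 0 (min 0 1))) • (m0 : Measure α)
        + (ENNReal.ofReal (max 0 (min 0 1))) • (m : Measure α) = (m0 : Measure α)
    rw [clamp_eq le_rfl zero_le_one]
    simp
  rw [hψ] at hfin
  simp only [hc0] at hfin
  exact hfin

end gradIneq

section klAux

variable {X : Type*} [MeasurableSpace X] {μ : Measure X}

lemma kl_aux (ρ ρ' : X → ℝ)
    (hρpos : ∀ x, 0 < ρ x) (hρ'0 : ∀ x, 0 ≤ ρ' x)
    (hint : Integrable (fun x => ρ' x * Real.log (ρ' x) - ρ' x * Real.log (ρ x)) μ)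
    (hρint : Integrable ρ μ) (hρ'int : Integrable ρ' μ)
    (hρ1 : ∫ x, ρ x ∂μ = 1) (hρ'1 : ∫ x, ρ' x ∂μ = 1) :
    0 ≤ (∫ x, (ρ' x * Real.log (ρ' x) - ρ' x * Real.log (ρ x)) ∂μ) ∧
      ((∫ x, (ρ' x * Real.log (ρ' x) - ρ' x * Real.log (ρ x)) ∂μ) = 0 → ρ' =ᵐ[μ] ρ) := by
  have hpt : ∀ x, ρ' x - ρ x ≤ ρ' x * Real.log (ρ' x) - ρ' x * Real.log (ρ x) := by
    intro x
    rcases eq_or_lt_of_le (hρ'0 x) with h | h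
    · rw [← h]; simp; linarith [hρpos x]
    · have hlog := Real.log_le_sub_one_of_pos (div_pos (hρpos x) h)
      rw [Real.log_div (hρpos x).ne' h.ne'] at hlog
      have h2 : ρ' x * (Real.log (ρ x) - Real.log (ρ' x)) ≤ ρ' x * (ρ x / ρ' x - 1) :=
        mul_le_mul_of_nonneg_left hlog h.le
      have h3 : ρ' x * (ρ x / ρ' x - 1) = ρ x - ρ' x := by field_simp
      nlinarith [h2, h3]
  have hzero : (∫ x, (ρ' x - ρ x) ∂μ) = 0 := by
    rw [integral_sub hρ'int hρint, hρ'1, hρ1, sub_self]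
  constructor
  · calc (0:ℝ) = ∫ x, (ρ' x - ρ x) ∂μ := hzero.symm
    _ ≤ _ := integral_mono (hρ'int.sub hρint) hint hpt
  · intro hKzero
    have hgint : Integrable
        (fun x => (ρ' x * Real.log (ρ' x) - ρ' x * Real.log (ρ x)) - (ρ' x - ρ x)) μ :=
      hint.sub (hρ'int.sub hρint)
    have hgzero : (∫ x, ((ρ' x * Real.log (ρ' x) - ρ' x * Real.log (ρ x)) - (ρ' x - ρ x)) ∂μ)
        = 0 := by
      have h := integral_sub hint (hρ'int.sub hρint)
      simp only [Pi.sub_apply] at h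
      rw [hKzero, hzero, sub_self] at h
      exact h
    have hae := (integral_eq_zero_iff_of_nonneg
      (fun x => by simpa using sub_nonneg.mpr (hpt x)) hgint).mp hgzero
    filter_upwards [hae] with x hx
    simp only [Pi.zero_apply, sub_eq_zero] at hx
    rcases eq_or_lt_of_le (hρ'0 x) with h | h
    · exfalso
      rw [← h] at hx
      simp at hx
      exact (hρpos x).ne' hx
    · by_contra hne
      have hdne : ρ x / ρ' x ≠ 1 := by
        intro hd
        apply hne
        field_simp at hd
        linarith
      have hlog := Real.log_lt_sub_one_of_pos (div_pos (hρpos x) h) hdne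
      rw [Real.log_div (hρpos x).ne' h.ne'] at hlog
      have h2 : ρ' x * (Real.log (ρ x) - Real.log (ρ' x)) < ρ' x * (ρ x / ρ' x - 1) :=
        (mul_lt_mul_iff_right₀ h).mpr hlog
      have h3 : ρ' x * (ρ x / ρ' x - 1) = ρ x - ρ' x := by field_simp
      nlinarith [h2, h3, hx]

end klAux

section entropyHelpers

variable {d : ℕ} {U : Rd d → ℝ} {m : PM (Rd d)} {ρ' ρ₁ ρ₂ : Rd d → ℝ}

lemma EntPred.lintegral_eq (h : EntPred U m ρ') :
    ∫⁻ x, ENNReal.ofReal (ρ' x) = 1 := by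
  have h1 : (m : Measure (Rd d)) Set.univ = 1 := measure_univ
  rw [h.2.2.1, withDensity_apply _ MeasurableSet.univ, Measure.restrict_univ] at h1
  exact h1

lemma EntPred.integrable (h : EntPred U m ρ') : Integrable ρ' (volume : Measure (Rd d)) := by
  refine ⟨h.1.aestronglyMeasurable, ?_⟩
  rw [HasFiniteIntegral]
  have heq : ∀ x : Rd d, ‖ρ' x‖ₑ = ENNReal.ofReal (ρ' x) := fun x =>
    Real.enorm_eq_ofReal (h.2.1 x)
  simp_rw [heq]
  rw [h.lintegral_eq]
  exact ENNReal.one_lt_top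

lemma EntPred.integral_eq_one (h : EntPred U m ρ') : ∫ x, ρ' x = 1 := by
  rw [integral_eq_lintegral_of_nonneg_ae (ae_of_all _ h.2.1) h.1.aestronglyMeasurable,
    h.lintegral_eq]
  exact ENNReal.toReal_one

lemma EntPred.integral_density (h : EntPred U m ρ') (g : Rd d → ℝ) :
    ∫ x, g x ∂(m : Measure (Rd d)) = ∫ x, ρ' x * g x := by
  rw [h.2.2.1]
  have hm : Measurable fun x => (ρ' x).toNNReal := h.1.real_toNNReal
  have heq : (fun x : Rd d => ENNReal.ofReal (ρ' x))
      = fun x => (((ρ' x).toNNReal : ℝ≥0) : ℝ≥0∞) := rfl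
  rw [heq, integral_withDensity_eq_integral_smul hm]
  refine integral_congr_ae (ae_of_all _ fun x => ?_)
  simp [NNReal.smul_def, Real.coe_toNNReal _ (h.2.1 x)]

lemma densities_ae_eq (h₁ : EntPred U m ρ₁) (h₂ : EntPred U m ρ₂) :
    ρ₁ =ᵐ[(volume : Measure (Rd d))] ρ₂ := by
  have hw : (volume : Measure (Rd d)).withDensity (fun x => ENNReal.ofReal (ρ₁ x))
      = (volume : Measure (Rd d)).withDensity (fun x => ENNReal.ofReal (ρ₂ x)) := by
    rw [← h₁.2.2.1, ← h₂.2.2.1]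
  have hae := (withDensity_eq_iff (h₁.1.ennreal_ofReal.aemeasurable)
    (h₂.1.ennreal_ofReal.aemeasurable)
    (by rw [h₁.lintegral_eq]; exact ENNReal.one_ne_top)).mp hw
  filter_upwards [hae] with x hx
  exact (ENNReal.ofReal_eq_ofReal_iff (h₁.2.1 x) (h₂.2.1 x)).mp hx

lemma entPred_integral_congr (h₁ : EntPred U m ρ₁) (h₂ : EntPred U m ρ₂) :
    ∫ x, (ρ₁ x * Real.log (ρ₁ x) + ρ₁ x * U x)
      = ∫ x, (ρ₂ x * Real.log (ρ₂ x) + ρ₂ x * U x) :=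
  integral_congr_ae ((densities_ae_eq h₁ h₂).mono fun x hx => by simp only [hx])

end entropyHelpers
/-- **The first order condition identifies the unique minimizer of the free energy**:
if `m̃` has a strictly positive `C¹` density with finite entropy and
`D_mF(m̃,·) + (σ²/2)(∇m̃/m̃ + ∇U) = 0`, then `m̃` is the unique minimizer of `V^σ`. -/
theorem stationary_point_is_unique_minimizer {d : ℕ}
    (F : PM (Rd d) → ℝ) (DF : PM (Rd d) → Rd d → ℝ) (DmF : PM (Rd d) → Rd d → Rd d)
    -- `F` is `C¹` with linear functional derivative `DF` and intrinsic derivative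
    -- `DmF(m,x) = ∇_x DF(m,x)`
    (hC1 : IsC1 F DF)
    (hgrad : ∀ (m : PM (Rd d)) (x : Rd d), HasGradientAt (DF m) (DmF m x) x)
    (hConv : ConvexPM F) (hBddBelow : BddBelow (Set.range F))
    (σ : ℝ) (hσ : 0 < σ) (U : Rd d → ℝ) (hU : GibbsPotential U)
    (mtilde : PM (Rd d)) (hP2 : P2 mtilde)
    (ρ : Rd d → ℝ) (hρ_C1 : ContDiff ℝ 1 ρ) (hρ_pos : ∀ x, 0 < ρ x)
    (hdens : (mtilde : Measure (Rd d))
      = (volume : Measure (Rd d)).withDensity fun x => ENNReal.ofReal (ρ x))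
    (hent : Integrable fun x => ρ x * Real.log (ρ x) + ρ x * U x)
    (hfoc : ∀ x : Rd d,
      DmF mtilde x + (σ ^ 2 / 2) • ((ρ x)⁻¹ • gradient ρ x + gradient U x) = 0) :
    (∀ m : PM (Rd d), freeEnergy σ U F mtilde ≤ freeEnergy σ U F m) ∧
    (∀ m' : PM (Rd d),
      (∀ m : PM (Rd d), freeEnergy σ U F m' ≤ freeEnergy σ U F m) → m' = mtilde) := by
  have hσ2pos : (0:ℝ) < σ ^ 2 / 2 := by positivity
  obtain ⟨C, hC⟩ := hC1.bounded
  have hC0 : 0 ≤ C := (abs_nonneg _).trans (hC mtilde 0)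
  have hφint : ∀ μ' : PM (Rd d), Integrable (DF mtilde) (μ' : Measure (Rd d)) :=
    DF_integrable hC1 hC mtilde
  -- Step 1: the first order condition forces `DF(m̃,·) + (σ²/2)(log ρ + U)` to be constant.
  have hUdiff : Differentiable ℝ U := hU.smooth.differentiable (by simp)
  have hw : ∀ x : Rd d, HasFDerivAt
      (fun y => DF mtilde y + (σ ^ 2 / 2) * (Real.log (ρ y) + U y))
      (0 : Rd d →L[ℝ] ℝ) x := by
    intro x
    have h1 : HasFDerivAt (DF mtilde)
        ((InnerProductSpace.toDual ℝ (Rd d)) (DmF mtilde x)) x := (hgrad mtilde x).hasFDerivAt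
    have hρd : HasFDerivAt ρ ((InnerProductSpace.toDual ℝ (Rd d)) (gradient ρ x)) x :=
      ((hρ_C1.differentiable one_ne_zero) x).hasGradientAt.hasFDerivAt
    have hlog : HasFDerivAt (fun y => Real.log (ρ y))
        ((ρ x)⁻¹ • ((InnerProductSpace.toDual ℝ (Rd d)) (gradient ρ x))) x :=
      (Real.hasDerivAt_log (hρ_pos x).ne').comp_hasFDerivAt x hρd
    have hUd : HasFDerivAt U ((InnerProductSpace.toDual ℝ (Rd d)) (gradient U x)) x :=
      (hUdiff x).hasGradientAt.hasFDerivAt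
    have hsum := h1.add ((hlog.add hUd).const_mul (σ ^ 2 / 2))
    have hz : (InnerProductSpace.toDual ℝ (Rd d))
        (DmF mtilde x + (σ ^ 2 / 2) • ((ρ x)⁻¹ • gradient ρ x + gradient U x)) = 0 := by
      rw [hfoc x]; exact map_zero _
    simp only [map_add, _root_.map_smul] at hz
    exact hsum.congr_fderiv hz
  set c0 : ℝ := DF mtilde 0 + (σ ^ 2 / 2) * (Real.log (ρ 0) + U 0) with hc0def
  have hconst : ∀ x : Rd d, DF mtilde x + (σ ^ 2 / 2) * (Real.log (ρ x) + U x) = c0 :=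
    fun x => is_const_of_fderiv_eq_zero (fun y => (hw y).differentiableAt)
      (fun y => (hw y).fderiv) x 0
  -- Step 2: the function `b = log ρ + U` is bounded and measurable.
  set b : Rd d → ℝ := fun x => Real.log (ρ x) + U x with hbdef
  have hbmeas : Measurable b :=
    (Real.measurable_log.comp hρ_C1.continuous.measurable).add hU.smooth.continuous.measurable
  have hσsq : (σ:ℝ) ^ 2 ≠ 0 := by positivity
  have hbb : ∀ x, b x = (c0 - DF mtilde x) * (2 / σ ^ 2) := by
    intro x
    have h := hconst x
    field_simp
    linear_combination 2 * h
  set Cb : ℝ := (|c0| + C) * (2 / σ ^ 2) with hCbdef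
  have hbbound : ∀ x, |b x| ≤ Cb := by
    intro x
    rw [hbb x, abs_mul, abs_of_pos (by positivity : (0:ℝ) < 2 / σ ^ 2)]
    exact mul_le_mul_of_nonneg_right
      ((abs_sub _ _).trans (add_le_add le_rfl (hC mtilde x))) (by positivity)
  -- Step 3: the reference measure satisfies the entropy predicate.
  have hEnt : EntPred U mtilde ρ :=
    ⟨hρ_C1.continuous.measurable, fun x => (hρ_pos x).le, hdens, hent⟩
  set A : ℝ := ∫ x, (ρ x * Real.log (ρ x) + ρ x * U x) with hAdef
  -- free energy values
  have hfree : ∀ (m : PM (Rd d)) (ρ' : Rd d → ℝ), EntPred U m ρ' →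
      freeEnergy σ U F m
        = (((F m + σ ^ 2 / 2 * ∫ x, (ρ' x * Real.log (ρ' x) + ρ' x * U x)) : ℝ) : EReal) := by
    intro m ρ' h'
    have hex : ∃ r, EntPred U m r := ⟨ρ', h'⟩
    have h1 : relEnt U m
        = (((∫ x, (ρ' x * Real.log (ρ' x) + ρ' x * U x)) : ℝ) : EReal) := by
      unfold relEnt
      rw [dif_pos hex]
      exact_mod_cast congrArg (fun r : ℝ => (r : EReal))
        (entPred_integral_congr hex.choose_spec h')
    unfold freeEnergy
    rw [h1, ← EReal.coe_mul, ← EReal.coe_add]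
  have hfree_top : ∀ m : PM (Rd d), ¬(∃ r, EntPred U m r) → freeEnergy σ U F m = ⊤ := by
    intro m hm
    unfold freeEnergy relEnt
    rw [dif_neg hm, EReal.coe_mul_top_of_pos hσ2pos, EReal.coe_add_top]
  -- Step 4: the master inequality.
  have main : ∀ (m : PM (Rd d)) (ρ' : Rd d → ℝ), EntPred U m ρ' →
      ∃ K : ℝ, 0 ≤ K ∧ (K = 0 → m = mtilde) ∧
        F mtilde + σ ^ 2 / 2 * A + σ ^ 2 / 2 * K
          ≤ F m + σ ^ 2 / 2 * ∫ x, (ρ' x * Real.log (ρ' x) + ρ' x * U x) := by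
    intro m ρ' h'
    have hρ'b_int : Integrable (fun x => ρ' x * b x) (volume : Measure (Rd d)) := by
      refine Integrable.mono' ((h'.integrable).const_mul Cb)
        ((h'.1.mul hbmeas).aestronglyMeasurable) (ae_of_all _ fun x => ?_)
      calc ‖ρ' x * b x‖ = ρ' x * |b x| := by
            rw [norm_mul, Real.norm_eq_abs, Real.norm_eq_abs, abs_of_nonneg (h'.2.1 x)]
      _ ≤ ρ' x * Cb := mul_le_mul_of_nonneg_left (hbbound x) (h'.2.1 x)
      _ = Cb * ρ' x := mul_comm _ _
    have hρb_int : Integrable (fun x => ρ x * b x) (volume : Measure (Rd d)) := by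
      refine Integrable.mono' ((hEnt.integrable).const_mul Cb)
        ((hEnt.1.mul hbmeas).aestronglyMeasurable) (ae_of_all _ fun x => ?_)
      calc ‖ρ x * b x‖ = ρ x * |b x| := by
            rw [norm_mul, Real.norm_eq_abs, Real.norm_eq_abs, abs_of_nonneg (hρ_pos x).le]
      _ ≤ ρ x * Cb := mul_le_mul_of_nonneg_left (hbbound x) (hρ_pos x).le
      _ = Cb * ρ x := mul_comm _ _
    have hKint : Integrable
        (fun x => ρ' x * Real.log (ρ' x) - ρ' x * Real.log (ρ x)) (volume : Measure (Rd d)) := by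
      refine (h'.2.2.2.sub hρ'b_int).congr (ae_of_all _ fun x => ?_)
      simp only [Pi.sub_apply, hbdef]
      ring
    set K : ℝ := ∫ x, (ρ' x * Real.log (ρ' x) - ρ' x * Real.log (ρ x)) with hKdef
    have hkl := kl_aux ρ ρ' hρ_pos h'.2.1 hKint hEnt.integrable h'.integrable
      hEnt.integral_eq_one h'.integral_eq_one
    refine ⟨K, hkl.1, ?_, ?_⟩
    · intro hK0
      have hae := hkl.2 hK0
      apply Subtype.ext
      show (m : Measure (Rd d)) = (mtilde : Measure (Rd d))
      rw [h'.2.2.1, hdens]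
      exact withDensity_congr_ae (hae.mono fun x hx => by simp only [hx])
    · have hBdec : (∫ x, (ρ' x * Real.log (ρ' x) + ρ' x * U x))
          = K + ∫ x, ρ' x * b x := by
        rw [hKdef, ← integral_add hKint hρ'b_int]
        refine integral_congr_ae (ae_of_all _ fun x => ?_)
        simp only [hbdef]
        ring
      have hAdec : A = ∫ x, ρ x * b x := by
        rw [hAdef]
        refine integral_congr_ae (ae_of_all _ fun x => ?_)
        simp only [hbdef]
        ring
      have hbint : ∀ μ' : PM (Rd d), (∫ x, b x ∂(μ' : Measure (Rd d)))
          = (c0 - ∫ x, DF mtilde x ∂(μ' : Measure (Rd d))) * (2 / σ ^ 2) := by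
        intro μ'
        rw [integral_congr_ae (ae_of_all _ fun x => hbb x), integral_mul_const,
          integral_sub (integrable_const c0) (hφint μ'), integral_const]
        simp
      have hbm' : (∫ x, b x ∂(m : Measure (Rd d))) = ∫ x, ρ' x * b x := h'.integral_density b
      have hbmt : (∫ x, b x ∂(mtilde : Measure (Rd d))) = ∫ x, ρ x * b x :=
        hEnt.integral_density b
      have hgi := gradient_ineq hC1 hConv mtilde m
      have e1 : σ ^ 2 / 2 * A = c0 - ∫ x, DF mtilde x ∂(mtilde : Measure (Rd d)) := by
        rw [hAdec, ← hbmt, hbint mtilde]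
        field_simp
      have e2 : σ ^ 2 / 2 * (∫ x, (ρ' x * Real.log (ρ' x) + ρ' x * U x))
          = σ ^ 2 / 2 * K + (c0 - ∫ x, DF mtilde x ∂(m : Measure (Rd d))) := by
        rw [hBdec, ← hbm', hbint m, mul_add]
        congr 1
        field_simp
      linarith
  -- Step 5: conclusion.
  have hmin_all : ∀ m : PM (Rd d), freeEnergy σ U F mtilde ≤ freeEnergy σ U F m := by
    intro m
    by_cases hm : ∃ r, EntPred U m r
    · obtain ⟨ρ', h'⟩ := hm
      obtain ⟨K, hK0, _, hineq⟩ := main m ρ' h'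
      rw [hfree mtilde ρ hEnt, hfree m ρ' h']
      rw [EReal.coe_le_coe_iff]
      nlinarith [mul_nonneg hσ2pos.le hK0]
    · rw [hfree_top m hm]
      exact le_top
  refine ⟨hmin_all, fun m' hmin => ?_⟩
  have h1 := hmin mtilde
  have hm' : ∃ r, EntPred U m' r := by
    by_contra hno
    rw [hfree_top m' hno, hfree mtilde ρ hEnt] at h1
    exact EReal.coe_ne_top _ (top_le_iff.mp h1)
  obtain ⟨ρ', h'⟩ := hm'
  obtain ⟨K, hK0, hKeq, hineq⟩ := main m' ρ' h'
  have h3 : freeEnergy σ U F m' = freeEnergy σ U F mtilde :=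
    le_antisymm h1 (hmin_all m')
  rw [hfree m' ρ' h', hfree mtilde ρ hEnt] at h3
  have h4 : F m' + σ ^ 2 / 2 * (∫ x, (ρ' x * Real.log (ρ' x) + ρ' x * U x))
      = F mtilde + σ ^ 2 / 2 * A := by exact_mod_cast h3
  have h5 : K ≤ 0 := by nlinarith [hineq, h4]
  exact hKeq (le_antisymm h5 hK0)

end
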